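/- Let S be a commutative noetherian ring, let I, J, K be ideals of S, and let 𝒳, 𝒴, 𝒵 be full subcategories (classes closed under isomorphism) of finitely generated modules over S/I, S/J, S/K respectively. Then (𝒳 ∗ 𝒴) ∗ 𝒵 = 𝒳 ∗ (𝒴 ∗ 𝒵) as classes of finitely generated S/(IJK)-modules. -/

import Mathlib

universe u

variable (S : Type u) [CommRing S]

/-- A short exact sequence `0 → X → M → Y → 0` of `S`-modules. -/
def SES (X M Y : ModuleCat.{u} S) : Prop :=
  ∃ (f : X →ₗ[S] M) (g : M →ₗ[S] Y),
    Function.Injective f ∧ Function.Surjective g ∧ LinearMap.range f = LinearMap.ker g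

/-- The class `𝒳 ∗ 𝒴` of finitely generated modules `M` admitting a short exact sequence
`0 → X → M → Y → 0` of `S`-modules with `X ∈ 𝒳` and `Y ∈ 𝒴`. -/
def starOp (𝒳 𝒴 : Set (ModuleCat.{u} S)) : Set (ModuleCat.{u} S) :=
  {M | Module.Finite S M ∧ ∃ X ∈ 𝒳, ∃ Y ∈ 𝒴, SES S X M Y}

/-- A class of modules is closed under isomorphism. -/
def IsoClosed (𝒳 : Set (ModuleCat.{u} S)) : Prop :=
  ∀ M N : ModuleCat.{u} S, Nonempty (M ≃ₗ[S] N) → M ∈ 𝒳 → N ∈ 𝒳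

/-- `𝒳` is a class of finitely generated modules over `S/I`, viewed as the class of
finitely generated `S`-modules killed by `I`. -/
def IsClassOver (I : Ideal S) (𝒳 : Set (ModuleCat.{u} S)) : Prop :=
  ∀ M ∈ 𝒳, Module.Finite S M ∧ ∀ a ∈ I, ∀ m : M, a • m = 0

/-! If `0 → W → M → Z → 0` is exact and `W` is an extension of `X` by `Y`, then the image `N`
of `X` in `M` has `M ⧸ N` an extension of `Y ≅ W ⧸ X` by `Z` (third isomorphism theorem).
Conversely, if `0 → X → M → W → 0` is exact and `W` is an extension of `Y` by `Z`, then the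
preimage `N ⊆ M` of `Y ⊆ W` is an extension of `X` by `Y` with `M ⧸ N ≅ Z`; it is finitely
generated because `S` is noetherian. -/

open Function LinearMap Submodule

section Extension

variable {R X W M Z : Type*} [Ring R] [AddCommGroup X] [AddCommGroup W] [AddCommGroup M]
  [AddCommGroup Z] [Module R X] [Module R W] [Module R M] [Module R Z]

theorem Submodule.injective_mapQ_map {f : W →ₗ[R] M} (hf : Injective f) (U : Submodule R W) :
    Injective (U.mapQ (U.map f) f (le_comap_map f U)) := by
  rw [← ker_eq_bot, ker_mapQ, comap_map_eq_of_injective hf, mkQ_map_self]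

theorem Function.Exact.mapQ_map_liftQ {f : W →ₗ[R] M} {g : M →ₗ[R] Z} (hfg : Exact f g)
    (U : Submodule R W) (hU : U.map f ≤ ker g) :
    Exact (U.mapQ (U.map f) f (le_comap_map f U)) ((U.map f).liftQ g hU) := by
  rw [exact_iff, ker_liftQ, range_mapQ, hfg.linearMap_ker_eq]

theorem Function.Exact.codRestrict_restrict_comap {f : X →ₗ[R] M} {g : M →ₗ[R] W}
    (hfg : Exact f g) (V : Submodule R W) (hf : ∀ x, f x ∈ V.comap g) :
    Exact (f.codRestrict (V.comap g) hf) (g.restrict (p := V.comap g) (q := V) fun _ h ↦ h) := by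
  rw [exact_iff, ker_restrict, range_codRestrict, hfg.linearMap_ker_eq]

theorem LinearMap.surjective_restrict_comap {g : M →ₗ[R] W} (hg : Surjective g)
    (V : Submodule R W) : Surjective (g.restrict (p := V.comap g) (q := V) fun _ h ↦ h) := by
  rintro ⟨w, hw⟩
  obtain ⟨m, rfl⟩ := hg w
  exact ⟨⟨m, hw⟩, rfl⟩

theorem Submodule.exact_subtype_comap_mkQ_comp (g : M →ₗ[R] W) (V : Submodule R W) :
    Exact (V.comap g).subtype (V.mkQ ∘ₗ g) := by
  rw [exact_iff, ker_comp, ker_mkQ, range_subtype]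

end Extension

variable {S}

theorem SES.exists_exact {X M Y : ModuleCat.{u} S} (h : SES S X M Y) :
    ∃ (f : X →ₗ[S] M) (g : M →ₗ[S] Y), Injective f ∧ Surjective g ∧ Exact f g := by
  obtain ⟨f, g, hf, hg, hfg⟩ := h
  exact ⟨f, g, hf, hg, exact_iff.2 hfg.symm⟩

theorem SES.of_exact {X M Y : ModuleCat.{u} S} {X' Y' : Type*} [AddCommGroup X'] [Module S X']
    [AddCommGroup Y'] [Module S Y'] (eX : X ≃ₗ[S] X') (eY : Y' ≃ₗ[S] Y) {f : X' →ₗ[S] M}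
    {g : M →ₗ[S] Y'} (hf : Injective f) (hg : Surjective g) (hfg : Exact f g) : SES S X M Y :=
  ⟨f ∘ₗ eX, eY ∘ₗ g, hf.comp eX.injective, eY.surjective.comp hg, by
    rw [LinearEquiv.range_comp, LinearEquiv.ker_comp, hfg.linearMap_ker_eq]⟩

theorem starOp_starOp_subset (𝒳 𝒴 𝒵 : Set (ModuleCat.{u} S)) :
    starOp S (starOp S 𝒳 𝒴) 𝒵 ⊆ starOp S 𝒳 (starOp S 𝒴 𝒵) := by
  rintro M ⟨hM, W, ⟨-, X, hX, Y, hY, hXWY⟩, Z, hZ, hWMZ⟩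
  obtain ⟨u, v, hu, hv, huv⟩ := hXWY.exists_exact
  obtain ⟨f, g, hf, hg, hfg⟩ := hWMZ.exists_exact
  set N := (range u).map f
  have hN : N ≤ ker g := hfg.linearMap_ker_eq ▸ map_le_range
  refine ⟨hM, X, hX, ModuleCat.of S (M ⧸ N), ⟨inferInstance, Y, hY, Z, hZ, ?_⟩, ?_⟩
  · exact .of_exact (huv.linearEquivOfSurjective hv).symm (.refl _ _) (injective_mapQ_map hf _)
      (fun z ↦ let ⟨m, hm⟩ := hg z; ⟨N.mkQ m, hm⟩) (hfg.mapQ_map_liftQ _ hN)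
  · exact .of_exact (f := f ∘ₗ u) (.refl _ _) (.refl _ _) (hf.comp hu) N.mkQ_surjective
      (exact_iff.2 (by rw [ker_mkQ, range_comp]))

theorem starOp_starOp_supset [IsNoetherianRing S] (𝒳 𝒴 𝒵 : Set (ModuleCat.{u} S)) :
    starOp S 𝒳 (starOp S 𝒴 𝒵) ⊆ starOp S (starOp S 𝒳 𝒴) 𝒵 := by
  rintro M ⟨hM, X, hX, W, ⟨-, Y, hY, Z, hZ, hYWZ⟩, hXMW⟩
  obtain ⟨f, g, hf, hg, hfg⟩ := hXMW.exists_exact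
  obtain ⟨v, w, hv, hw, hvw⟩ := hYWZ.exists_exact
  set N := (range v).comap g
  have hfN (x : X) : f x ∈ N := by simp [N, hfg.apply_apply_eq_zero]
  refine ⟨hM, ModuleCat.of S N, ⟨?_, X, hX, Y, hY, ?_⟩, Z, hZ, ?_⟩
  · exact Module.Finite.iff_fg.2 (IsNoetherian.noetherian N)
  · exact .of_exact (.refl _ _) (LinearEquiv.ofInjective v hv).symm
      ((injective_codRestrict_iff _).2 hf) (surjective_restrict_comap hg _)
      (hfg.codRestrict_restrict_comap _ hfN)
  · exact .of_exact (.refl _ _) (hvw.linearEquivOfSurjective hw) N.injective_subtype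
      ((mkQ_surjective _).comp hg) (exact_subtype_comap_mkQ_comp g _)

theorem stmt7_general {S : Type u} [CommRing S] [IsNoetherianRing S]
    (𝒳 𝒴 𝒵 : Set (ModuleCat.{u} S)) :
    starOp S (starOp S 𝒳 𝒴) 𝒵 = starOp S 𝒳 (starOp S 𝒴 𝒵) :=
  (starOp_starOp_subset 𝒳 𝒴 𝒵).antisymm (starOp_starOp_supset 𝒳 𝒴 𝒵)

/-- Proposition 8: the operation `∗` on classes of modules over quotient rings of `S` is
associative: `(𝒳 ∗ 𝒴) ∗ 𝒵 = 𝒳 ∗ (𝒴 ∗ 𝒵)` as classes of finitely generated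
`S/(IJK)`-modules. -/
theorem stmt7 {S : Type u} [CommRing S] [IsNoetherianRing S]
    (I J K : Ideal S) (𝒳 𝒴 𝒵 : Set (ModuleCat.{u} S))
    (hX : IsClassOver S I 𝒳) (hY : IsClassOver S J 𝒴) (hZ : IsClassOver S K 𝒵)
    (hXiso : IsoClosed S 𝒳) (hYiso : IsoClosed S 𝒴) (hZiso : IsoClosed S 𝒵) :
    starOp S (starOp S 𝒳 𝒴) 𝒵 = starOp S 𝒳 (starOp S 𝒴 𝒵) :=
  stmt7_general 𝒳 𝒴 𝒵
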